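/- Let n ≥ 1, let U ⊆ ℝⁿ be open, and let v : ℝⁿ → ℝ be three times continuously differentiable, strictly positive on U, and satisfy Δv = (n/2)·|Dv|²/v on U. Then for γ = −n/2 the following pointwise inequality holds on U: div( v^{−n/2}·S²_{ij}(D²v)·∂_i v ) + (−n/4)·div( v^{−n/2−1}·|Dv|²·Dv ) ≤ 0. -/

import Mathlib

/-- Partial derivative `∂_i f` of a function on `ℝⁿ`. -/
noncomputable def pd {n : ℕ} (i : Fin n) (f : (Fin n → ℝ) → ℝ) (x : Fin n → ℝ) : ℝ :=
  fderiv ℝ f x (Pi.single i 1)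

/-- Laplacian `Δf = ∑ᵢ ∂ᵢᵢ f`. -/
noncomputable def lap {n : ℕ} (f : (Fin n → ℝ) → ℝ) (x : Fin n → ℝ) : ℝ :=
  ∑ i, pd i (pd i f) x

/-- `S²_{ij}(D²v) = (Δv)·δ_{ij} − ∂_{ij}v`. -/
noncomputable def S2ij {n : ℕ} (v : (Fin n → ℝ) → ℝ) (i j : Fin n) (x : Fin n → ℝ) : ℝ :=
  lap v x * (if i = j then 1 else 0) - pd j (pd i v) x

/-- `|Df|² = ∑ᵢ (∂ᵢf)²`. -/
noncomputable def gradSq {n : ℕ} (f : (Fin n → ℝ) → ℝ) (x : Fin n → ℝ) : ℝ :=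
  ∑ i, (pd i f x) ^ 2

/-!
The field `S²_{ij}(D²v)` is divergence-free (`∑ⱼ ∂ⱼ S²_{ij} = ∂ᵢΔv − Δ∂ᵢv = 0` by symmetry of
third derivatives), so both divergences expand into `v`, `Δv`, `|Dv|²`, `D²v(Dv, Dv)` and
`|D²v|²`. For `γ = −n/2` and the weight `−n/4` the `D²v(Dv, Dv)` terms cancel, and the equation
`vΔv = (n/2)|Dv|²` turns the rest into `v^{−n/2−2}((n/4)|Dv|⁴ − v²|D²v|²)`, which is nonpositive
by `(Δv)² ≤ n|D²v|²` (Cauchy–Schwarz on the diagonal of the Hessian).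
-/

open Finset Topology

noncomputable def hessNormSq {n : ℕ} (v : (Fin n → ℝ) → ℝ) (x : Fin n → ℝ) : ℝ :=
  ∑ i, ∑ j, pd j (pd i v) x ^ 2

noncomputable def hessGradGrad {n : ℕ} (v : (Fin n → ℝ) → ℝ) (x : Fin n → ℝ) : ℝ :=
  ∑ i, ∑ j, pd j (pd i v) x * pd i v x * pd j v x

section Calculus

variable {n : ℕ} {f g v : (Fin n → ℝ) → ℝ} {x : Fin n → ℝ} {i j : Fin n}

lemma pd_congr (h : f =ᶠ[𝓝 x] g) (i : Fin n) : pd i f x = pd i g x := by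
  rw [pd, pd, h.fderiv_eq]

lemma pd_mul (hf : DifferentiableAt ℝ f x) (hg : DifferentiableAt ℝ g x) :
    pd i (fun y => f y * g y) x = pd i f x * g x + f x * pd i g x := by
  simp only [pd, fderiv_fun_mul hf hg, add_apply, smul_apply, smul_eq_mul]
  ring

lemma pd_sum {ι : Type*} (s : Finset ι) (F : ι → (Fin n → ℝ) → ℝ)
    (hF : ∀ k ∈ s, DifferentiableAt ℝ (F k) x) :
    pd i (fun y => ∑ k ∈ s, F k y) x = ∑ k ∈ s, pd i (F k) x := by
  simp only [pd, fderiv_fun_sum hF, _root_.sum_apply]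

lemma pd_sub (hf : DifferentiableAt ℝ f x) (hg : DifferentiableAt ℝ g x) :
    pd i (fun y => f y - g y) x = pd i f x - pd i g x := by
  simp only [pd, fderiv_fun_sub hf hg, sub_apply]

lemma pd_mul_const (hf : DifferentiableAt ℝ f x) (c : ℝ) :
    pd i (fun y => f y * c) x = pd i f x * c := by
  rw [pd, pd, fderiv_mul_const hf]
  simp [mul_comm]

lemma pd_rpow (hf : DifferentiableAt ℝ f x) (h0 : f x ≠ 0) (c : ℝ) :
    pd i (fun y => f y ^ c) x = c * f x ^ (c - 1) * pd i f x := by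
  simp [pd, (hf.hasFDerivAt.rpow_const (Or.inl h0)).fderiv]

lemma contDiffAt_pd {m : WithTop ℕ∞} (hf : ContDiffAt ℝ (m + 1) f x) (i : Fin n) :
    ContDiffAt ℝ m (pd i f) x :=
  (hf.fderiv_right le_rfl).clm_apply contDiffAt_const

lemma contDiffAt_pd_pd {m : WithTop ℕ∞} (hf : ContDiffAt ℝ (m + 2) f x) (i j : Fin n) :
    ContDiffAt ℝ m (pd j (pd i f)) x :=
  contDiffAt_pd (contDiffAt_pd (by rwa [add_assoc, one_add_one_eq_two]) i) j

lemma contDiffAt_lap {m : WithTop ℕ∞} (hf : ContDiffAt ℝ (m + 2) f x) :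
    ContDiffAt ℝ m (lap f) x :=
  ContDiffAt.sum fun k _ => contDiffAt_pd_pd hf k k

lemma differentiableAt_pd (hf : ContDiffAt ℝ 2 f x) (i : Fin n) :
    DifferentiableAt ℝ (pd i f) x :=
  (contDiffAt_pd (m := 1) hf i).differentiableAt one_ne_zero

lemma differentiableAt_pd_pd (hf : ContDiffAt ℝ 3 f x) (i j : Fin n) :
    DifferentiableAt ℝ (pd j (pd i f)) x :=
  (contDiffAt_pd_pd (m := 1) hf i j).differentiableAt one_ne_zero

lemma differentiableAt_S2ij (hv : ContDiffAt ℝ 3 v x) (i j : Fin n) :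
    DifferentiableAt ℝ (S2ij v i j) x :=
  (((contDiffAt_lap (m := 1) hv).mul contDiffAt_const).sub
    (contDiffAt_pd_pd (m := 1) hv i j)).differentiableAt one_ne_zero

lemma differentiableAt_gradSq (hv : ContDiffAt ℝ 2 v x) : DifferentiableAt ℝ (gradSq v) x :=
  (ContDiffAt.sum fun i _ => (contDiffAt_pd (m := 1) hv i).pow 2).differentiableAt one_ne_zero

lemma pd_comm (hf : ContDiffAt ℝ 2 f x) : pd i (pd j f) x = pd j (pd i f) x := by
  have hd : DifferentiableAt ℝ (fderiv ℝ f) x :=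
    (hf.fderiv_right (m := 1) (by norm_num)).differentiableAt one_ne_zero
  have hsnd : ∀ a b : Fin n,
      pd a (pd b f) x = fderiv ℝ (fderiv ℝ f) x (Pi.single a 1) (Pi.single b 1) := by
    intro a b
    change fderiv ℝ (fun y => fderiv ℝ f y (Pi.single b 1)) x (Pi.single a 1) = _
    simp [fderiv_clm_apply hd (differentiableAt_const _)]
  rw [hsnd, hsnd, hf.isSymmSndFDerivAt (by simp)]

lemma pd_pd_pd_rotate (hv : ContDiffAt ℝ 3 v x) (a b c : Fin n) :
    pd a (pd b (pd c v)) x = pd c (pd a (pd b v)) x := by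
  have hswap : pd b (pd c v) =ᶠ[𝓝 x] pd c (pd b v) := by
    filter_upwards [hv.eventually (by simp)] with y hy
    exact pd_comm (hy.of_le (by norm_num))
  rw [pd_congr hswap, pd_comm (contDiffAt_pd (m := 2) hv b)]

end Calculus

section Identities

variable {n : ℕ} {v : (Fin n → ℝ) → ℝ} {x : Fin n → ℝ}

theorem sum_pd_S2ij_eq_zero (hv : ContDiffAt ℝ 3 v x) (i : Fin n) :
    ∑ j, pd j (S2ij v i j) x = 0 := by
  have hlap : DifferentiableAt ℝ (lap v) x :=
    (contDiffAt_lap (m := 1) hv).differentiableAt one_ne_zero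
  have hS2 : ∀ j, pd j (S2ij v i j) x
      = pd j (lap v) x * (if i = j then 1 else 0) - pd j (pd j (pd i v)) x := fun j => by
    rw [show S2ij v i j = fun y => lap v y * (if i = j then 1 else 0) - pd j (pd i v) y from rfl,
      pd_sub (hlap.mul_const _) (differentiableAt_pd_pd hv i j), pd_mul_const hlap]
  have hpdlap : pd i (lap v) x = ∑ k, pd k (pd k (pd i v)) x := by
    rw [show lap v = fun y => ∑ k, pd k (pd k v) y from rfl,
      pd_sum univ (fun k => pd k (pd k v)) fun k _ => differentiableAt_pd_pd hv k k]
    exact sum_congr rfl fun k _ => (pd_pd_pd_rotate hv k k i).symm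
  simp only [hS2, sum_sub_distrib, mul_ite, mul_one, mul_zero, sum_ite_eq, mem_univ, if_true,
    hpdlap, sub_self]

theorem sum_S2ij_mul_pd (j : Fin n) :
    ∑ i, S2ij v i j x * pd i v x = lap v x * pd j v x - ∑ i, pd j (pd i v) x * pd i v x := by
  simp only [S2ij, sub_mul, sum_sub_distrib, mul_ite, ite_mul, mul_one, mul_zero, zero_mul,
    sum_ite_eq', mem_univ, if_true]

theorem hessGradGrad_eq_sum :
    hessGradGrad v x = ∑ j, (∑ i, pd j (pd i v) x * pd i v x) * pd j v x := by
  rw [hessGradGrad, sum_comm]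
  simp only [sum_mul]

theorem sum_pd_sum_S2ij_mul_pd (hv : ContDiffAt ℝ 3 v x) :
    ∑ j, pd j (fun y => ∑ i, S2ij v i j y * pd i v y) x = lap v x ^ 2 - hessNormSq v x := by
  have hv2 : ContDiffAt ℝ 2 v x := hv.of_le (by norm_num)
  have hterm : ∀ j, pd j (fun y => ∑ i, S2ij v i j y * pd i v y) x
      = ∑ i, (pd j (S2ij v i j) x * pd i v x + S2ij v i j x * pd j (pd i v) x) := fun j => by
    rw [pd_sum univ (fun i y => S2ij v i j y * pd i v y)
      fun i _ => (differentiableAt_S2ij hv i j).mul (differentiableAt_pd hv2 i)]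
    exact sum_congr rfl fun i _ => pd_mul (differentiableAt_S2ij hv i j) (differentiableAt_pd hv2 i)
  have hdiv : ∑ j, ∑ i, pd j (S2ij v i j) x * pd i v x = 0 := by
    rw [sum_comm]
    simp only [← sum_mul, sum_pd_S2ij_eq_zero hv, zero_mul, sum_const_zero]
  have hcontract : ∑ j, ∑ i, S2ij v i j x * pd j (pd i v) x = lap v x ^ 2 - hessNormSq v x := by
    rw [hessNormSq, sum_comm (f := fun i j => pd j (pd i v) x ^ 2)]
    simp only [S2ij, sub_mul, sum_sub_distrib, mul_ite, ite_mul, mul_one, mul_zero, zero_mul,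
      sum_ite_eq', mem_univ, if_true, lap, sq, ← mul_sum]
  calc _ = ∑ j, ∑ i, pd j (S2ij v i j) x * pd i v x
        + ∑ j, ∑ i, S2ij v i j x * pd j (pd i v) x := by simp only [hterm, sum_add_distrib]
    _ = _ := by rw [hdiv, zero_add, hcontract]

theorem sum_pd_mul_sum_S2ij_mul_pd :
    ∑ j, pd j v x * ∑ i, S2ij v i j x * pd i v x = lap v x * gradSq v x - hessGradGrad v x := by
  simp only [sum_S2ij_mul_pd, hessGradGrad_eq_sum, gradSq, mul_sum, ← sum_sub_distrib]
  exact sum_congr rfl fun j _ => by ring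

theorem pd_gradSq (hv : ContDiffAt ℝ 2 v x) (j : Fin n) :
    pd j (gradSq v) x = 2 * ∑ i, pd j (pd i v) x * pd i v x := by
  have hd := differentiableAt_pd hv
  rw [show gradSq v = fun y => ∑ i, pd i v y * pd i v y by funext y; simp only [gradSq, sq],
    pd_sum univ (fun i y => pd i v y * pd i v y) fun i _ => (hd i).mul (hd i), mul_sum]
  exact sum_congr rfl fun i _ => by rw [pd_mul (hd i) (hd i)]; ring

theorem sum_pd_gradSq_mul_pd (hv : ContDiffAt ℝ 2 v x) :
    ∑ j, pd j (fun y => gradSq v y * pd j v y) x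
      = 2 * hessGradGrad v x + gradSq v x * lap v x := by
  simp only [pd_mul (differentiableAt_gradSq hv) (differentiableAt_pd hv _), pd_gradSq hv,
    sum_add_distrib, hessGradGrad_eq_sum, lap, mul_sum]
  congr 1
  exact sum_congr rfl fun j _ => by rw [← mul_sum]; ring

end Identities

section Divergence

variable {n : ℕ} {v : (Fin n → ℝ) → ℝ} {x : Fin n → ℝ}

theorem sum_pd_rpow_mul {X : Fin n → (Fin n → ℝ) → ℝ} (hv : DifferentiableAt ℝ v x)
    (hv0 : v x ≠ 0) (hX : ∀ j, DifferentiableAt ℝ (X j) x) (c : ℝ) :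
    ∑ j, pd j (fun y => v y ^ c * X j y) x
      = c * v x ^ (c - 1) * ∑ j, pd j v x * X j x + v x ^ c * ∑ j, pd j (X j) x := by
  simp only [pd_mul (hv.rpow_const (Or.inl hv0)) (hX _), pd_rpow hv hv0, mul_sum,
    ← sum_add_distrib]
  exact sum_congr rfl fun j _ => by ring

theorem sum_pd_rpow_mul_sum_S2ij_mul_pd (hv : ContDiffAt ℝ 3 v x) (hv0 : v x ≠ 0) (c : ℝ) :
    ∑ j, pd j (fun y => v y ^ c * ∑ i, S2ij v i j y * pd i v y) x
      = c * v x ^ (c - 1) * (lap v x * gradSq v x - hessGradGrad v x)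
        + v x ^ c * (lap v x ^ 2 - hessNormSq v x) := by
  have hv2 : ContDiffAt ℝ 2 v x := hv.of_le (by norm_num)
  rw [sum_pd_rpow_mul (X := fun j y => ∑ i, S2ij v i j y * pd i v y)
      (hv.differentiableAt (by norm_num)) hv0
      (fun j => DifferentiableAt.fun_sum fun i _ =>
        (differentiableAt_S2ij hv i j).mul (differentiableAt_pd hv2 i)) c,
    sum_pd_mul_sum_S2ij_mul_pd, sum_pd_sum_S2ij_mul_pd hv]

theorem sum_pd_rpow_mul_gradSq_mul_pd (hv : ContDiffAt ℝ 2 v x) (hv0 : v x ≠ 0) (c : ℝ) :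
    ∑ j, pd j (fun y => v y ^ c * gradSq v y * pd j v y) x
      = c * v x ^ (c - 1) * gradSq v x ^ 2
        + v x ^ c * (2 * hessGradGrad v x + gradSq v x * lap v x) := by
  simp only [mul_assoc]
  rw [sum_pd_rpow_mul (X := fun j y => gradSq v y * pd j v y)
      (hv.differentiableAt (by norm_num)) hv0
      (fun j => (differentiableAt_gradSq hv).mul (differentiableAt_pd hv j)) c,
    ← mul_assoc, sum_pd_gradSq_mul_pd hv]
  congr 2
  rw [sq]
  change _ = gradSq v x * ∑ i, pd i v x ^ 2
  rw [mul_sum]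
  exact sum_congr rfl fun j _ => by ring

end Divergence

theorem lap_sq_le_mul_hessNormSq {n : ℕ} (v : (Fin n → ℝ) → ℝ) (x : Fin n → ℝ) :
    lap v x ^ 2 ≤ n * hessNormSq v x :=
  calc lap v x ^ 2 ≤ n * ∑ i, pd i (pd i v) x ^ 2 := by
        simpa [lap] using sq_sum_le_card_mul_sum_sq (s := univ) (f := fun i => pd i (pd i v) x)
    _ ≤ n * hessNormSq v x := by
        unfold hessNormSq
        gcongr with i
        exact single_le_sum (f := fun j => pd j (pd i v) x ^ 2) (fun j _ => sq_nonneg _)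
          (mem_univ i)

theorem neg_half_combination_nonpos {d a L W H Q : ℝ} (hd : 0 < d) (ha : 0 < a)
    (hL : L = d / 2 * W / a) (hLQ : L ^ 2 ≤ d * Q) :
    -d / 2 * a ^ (-d / 2 - 1) * (L * W - H) + a ^ (-d / 2) * (L ^ 2 - Q)
      + -d / 4 * ((-d / 2 - 1) * a ^ (-d / 2 - 1 - 1) * W ^ 2
        + a ^ (-d / 2 - 1) * (2 * H + W * L)) ≤ 0 := by
  set t := a ^ (-d / 2 - 1 - 1)
  have h1 : a ^ (-d / 2 - 1) = t * a := by rw [← Real.rpow_add_one ha.ne']; norm_num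
  have h0 : a ^ (-d / 2) = t * a ^ 2 := by
    rw [sq, ← mul_assoc, ← h1, ← Real.rpow_add_one ha.ne']; norm_num
  have haL : a * L = d / 2 * W := by rw [hL]; field_simp
  have hQ : d / 4 * W ^ 2 ≤ a ^ 2 * Q := by
    have : (d / 2 * W) ^ 2 ≤ d * (a ^ 2 * Q) := by
      rw [← haL]; nlinarith [sq_nonneg a]
    nlinarith
  calc _ = t * (d / 4 * W ^ 2 - a ^ 2 * Q) := by
        rw [h0, h1]; linear_combination (-(d / 4) * t * W + t * a * L) * haL
    _ ≤ 0 := mul_nonpos_of_nonneg_of_nonpos (by positivity) (by linarith)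

/-- For `γ = −n/2`: if `v > 0` solves `Δv = (n/2)·|Dv|²/v` on `U`, then
`div(v^{−n/2}·S²_{ij}(D²v)·∂ᵢv) + (−n/4)·div(v^{−n/2−1}·|Dv|²·Dv) ≤ 0` on `U`. -/
theorem stmt_10 (n : ℕ) (hn : 1 ≤ n) (U : Set (Fin n → ℝ)) (hU : IsOpen U)
    (v : (Fin n → ℝ) → ℝ) (hv : ContDiffOn ℝ 3 v U) (hpos : ∀ x ∈ U, 0 < v x)
    (hpde : ∀ x ∈ U, lap v x = ((n : ℝ) / 2) * gradSq v x / v x)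
    (x : Fin n → ℝ) (hx : x ∈ U) :
    (∑ j, pd j (fun y => v y ^ (-(n : ℝ) / 2) * ∑ i, S2ij v i j y * pd i v y) x)
      + (-(n : ℝ) / 4)
        * ∑ j, pd j (fun y => v y ^ (-(n : ℝ) / 2 - 1) * gradSq v y * pd j v y) x
    ≤ 0 := by
  have hv3 : ContDiffAt ℝ 3 v x := hv.contDiffAt (hU.mem_nhds hx)
  rw [sum_pd_rpow_mul_sum_S2ij_mul_pd hv3 (hpos x hx).ne',
    sum_pd_rpow_mul_gradSq_mul_pd (hv3.of_le (by norm_num)) (hpos x hx).ne']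
  exact neg_half_combination_nonpos (by exact_mod_cast hn) (hpos x hx) (hpde x hx)
    (lap_sq_le_mul_hessNormSq v x)
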